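/- There exist complex numbers L₀ and M₀ with L₀ ≠ 0 and M₀ ≠ 0, and such that not both L₀ ∈ {1,−1} and M₀ ∈ {1,−1} hold, such that f_C(L₀, M₀) = 0 and A_{4_1}(M₀, L₀) = 0, where A_{4_1}(L,M) = L²M⁴ + L(−M⁸ − 1 + M⁶ + M² + 2M⁴) + M⁴. -/
import Mathlib

set_option maxRecDepth 8000
set_option maxHeartbeats 2000000

/-- The A-polynomial of the figure-eight knot, as a function on `ℂ × ℂ`. -/
noncomputable def A41 (L M : ℂ) : ℂ :=
  L ^ 2 * M ^ 4 + L * (-M ^ 8 - 1 + M ^ 6 + M ^ 2 + 2 * M ^ 4) + M ^ 4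

/-- The polynomial `f_C(L,M)` derived from the boundary restriction of the family `C` of
representations of the knot `K₀`, as a function on `ℂ × ℂ`. -/
noncomputable def fC (L M : ℂ) : ℂ :=
  L ^ 2 * M ^ 16 -
    L * ((M ^ 32 + 1) - 4 * (M ^ 30 + M ^ 2) - 2 * (M ^ 28 + M ^ 4) + 16 * (M ^ 26 + M ^ 6) +
      13 * (M ^ 24 + M ^ 8) - 32 * (M ^ 22 + M ^ 10) - 46 * (M ^ 20 + M ^ 12) +
      20 * (M ^ 18 + M ^ 14) + 70 * M ^ 16) +
    M ^ 16

open Polynomial in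
/-- The figure-eight knot satisfies the hypothesis of Corollary 1.4: `f_C(L,M)` and
`A_{4_1}(M,L)` have a common zero `(L₀,M₀)` with `L₀, M₀ ≠ 0` and not both
`L₀ ∈ {1,-1}` and `M₀ ∈ {1,-1}`. -/
theorem fC_A41_common_zero :
    ∃ L₀ M₀ : ℂ, L₀ ≠ 0 ∧ M₀ ≠ 0 ∧
      ¬((L₀ = 1 ∨ L₀ = -1) ∧ (M₀ = 1 ∨ M₀ = -1)) ∧
      fC L₀ M₀ = 0 ∧ A41 M₀ L₀ = 0 := by
  -- G(X) = F(X)/(X-2) where F(l) = S(l^4-5l^2+2) - l encodes the common-zero condition.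
  set p : Polynomial ℂ := X ^ 63 + C (2 : ℂ) * X ^ 62 - C (76 : ℂ) * X ^ 61 - C (152 : ℂ) * X ^ 60 + C (2728 : ℂ) * X ^ 59 + C (5456 : ℂ) * X ^ 58 - C (61488 : ℂ) * X ^ 57 - C (122976 : ℂ) * X ^ 56 + C (976008 : ℂ) * X ^ 55 + C (1952016 : ℂ) * X ^ 54 - C (11598168 : ℂ) * X ^ 53 - C (23196336 : ℂ) * X ^ 52 + C (107082748 : ℂ) * X ^ 51 + C (214165496 : ℂ) * X ^ 50 - C (786903808 : ℂ) * X ^ 49 - C (1573807616 : ℂ) * X ^ 48 + C (4677682016 : ℂ) * X ^ 47 + C (9355364032 : ℂ) * X ^ 46 - C (22739856816 : ℂ) * X ^ 45 - C (45479713632 : ℂ) * X ^ 44 + C (91053392264 : ℂ) * X ^ 43 + C (182106784528 : ℂ) * X ^ 42 - C (301593068984 : ℂ) * X ^ 41 - C (603186137968 : ℂ) * X ^ 40 + C (828030914598 : ℂ) * X ^ 39 + C (1656061829196 : ℂ) * X ^ 38 - C (1884696070808 : ℂ) * X ^ 37 - C (3769392141616 : ℂ) * X ^ 36 + C (3551181447488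 : ℂ) * X ^ 35 + C (7102362894976 : ℂ) * X ^ 34 - C (5522955962448 : ℂ) * X ^ 33 - C (11045911924896 : ℂ) * X ^ 32 + C (7059119599468 : ℂ) * X ^ 31 + C (14118239198936 : ℂ) * X ^ 30 - C (7371674237528 : ℂ) * X ^ 29 - C (14743348475056 : ℂ) * X ^ 28 + C (6241595819820 : ℂ) * X ^ 27 + C (12483191639640 : ℂ) * X ^ 26 - C (4242201555840 : ℂ) * X ^ 25 - C (8484403111680 : ℂ) * X ^ 24 + C (2283691226800 : ℂ) * X ^ 23 + C (4567382453600 : ℂ) * X ^ 22 - C (955770433600 : ℂ) * X ^ 21 - C (1911540867200 : ℂ) * X ^ 20 + C (302593981872 : ℂ) * X ^ 19 + C (605187963744 : ℂ) * X ^ 18 - C (69357854312 : ℂ) * X ^ 17 - C (138715708624 : ℂ) * X ^ 16 + C (10603944993 : ℂ) * X ^ 15 + C (21207889986 : ℂ) * X ^ 14 - C (875632348 : ℂ) * X ^ 13 - C (1751264696 : ℂ) * X ^ 12 + C (1983176 : ℂ) * X ^ 11 + C (3966352 : ℂ) * X ^ 10 + C (5347184 : ℂ) * X ^ 9 + C (10694368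 : ℂ) * X ^ 8 - C (148588 : ℂ) * X ^ 7 - C (297176 : ℂ) * X ^ 6 - C (16112 : ℂ) * X ^ 5 - C (32224 : ℂ) * X ^ 4 - C (240 : ℂ) * X ^ 3 - C (480 : ℂ) * X ^ 2 - C (1 : ℂ) with hp
  have hdeg : p.degree = 63 := by rw [hp]; compute_degree! <;> norm_num [WithBot.unbot']
  obtain ⟨l, hl⟩ := Complex.exists_root (f := p) (by rw [hdeg]; norm_num)
  rw [Polynomial.IsRoot.def, hp] at hl
  simp only [eval_add, eval_sub, eval_neg, eval_mul, eval_pow, eval_X, eval_C] at hl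
  have hG : l ^ 63 + 2 * l ^ 62 - 76 * l ^ 61 - 152 * l ^ 60 + 2728 * l ^ 59 + 5456 * l ^ 58 - 61488 * l ^ 57 - 122976 * l ^ 56 + 976008 * l ^ 55 + 1952016 * l ^ 54 - 11598168 * l ^ 53 - 23196336 * l ^ 52 + 107082748 * l ^ 51 + 214165496 * l ^ 50 - 786903808 * l ^ 49 - 1573807616 * l ^ 48 + 4677682016 * l ^ 47 + 9355364032 * l ^ 46 - 22739856816 * l ^ 45 - 45479713632 * l ^ 44 + 91053392264 * l ^ 43 + 182106784528 * l ^ 42 - 301593068984 * l ^ 41 - 603186137968 * l ^ 40 + 828030914598 * l ^ 39 + 1656061829196 * l ^ 38 - 1884696070808 * l ^ 37 - 3769392141616 * l ^ 36 + 3551181447488 * l ^ 35 + 7102362894976 * l ^ 34 - 5522955962448 * l ^ 33 - 11045911924896 * l ^ 32 + 7059119599468 * l ^ 31 + 14118239198936 * l ^ 30 - 7371674237528 * l ^ 29 - 14743348475056 * l ^ 28 + 6241595819820 * l ^ 27 + 12483191639640 * l ^ 26 - 4242201555840 * l ^ 25 - 8484403111680 * l ^ 24 + 2283691226800 * l ^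 23 + 4567382453600 * l ^ 22 - 955770433600 * l ^ 21 - 1911540867200 * l ^ 20 + 302593981872 * l ^ 19 + 605187963744 * l ^ 18 - 69357854312 * l ^ 17 - 138715708624 * l ^ 16 + 10603944993 * l ^ 15 + 21207889986 * l ^ 14 - 875632348 * l ^ 13 - 1751264696 * l ^ 12 + 1983176 * l ^ 11 + 3966352 * l ^ 10 + 5347184 * l ^ 9 + 10694368 * l ^ 8 - 148588 * l ^ 7 - 297176 * l ^ 6 - 16112 * l ^ 5 - 32224 * l ^ 4 - 240 * l ^ 3 - 480 * l ^ 2 - 1 = 0 := by linear_combination hl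
  have hl2 : l ≠ 2 := by
    rintro rfl; norm_num at hG
  have hlm2 : l ≠ -2 := by
    rintro rfl; norm_num at hG
  obtain ⟨t, ht⟩ : ∃ t : ℂ, t = l ^ 4 - 5 * l ^ 2 + 2 := ⟨_, rfl⟩
  obtain ⟨s, hs⟩ := IsAlgClosed.exists_pow_nat_eq (l ^ 2 - 4) (n := 2) (by norm_num)
  obtain ⟨r, hr⟩ := IsAlgClosed.exists_pow_nat_eq (t ^ 2 - 4) (n := 2) (by norm_num)
  obtain ⟨L, hL⟩ : ∃ L : ℂ, L ^ 2 - l * L + 1 = 0 := ⟨(l + s) / 2, by linear_combination hs / 4⟩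
  obtain ⟨M, hM⟩ : ∃ M : ℂ, M ^ 2 - t * M + 1 = 0 := ⟨(t + r) / 2, by linear_combination hr / 4⟩
  have hSt : t ^ 16 - 20 * t ^ 14 + 158 * t ^ 12 - 620 * t ^ 10 + 1245 * t ^ 8 - 1200 * t ^ 6 + 516 * t ^ 4 - 80 * t ^ 2 + 2 = l := by
    rw [ht]; linear_combination (l - 2) * hG
  refine ⟨L, M, ?_, ?_, ?_, ?_, ?_⟩
  · intro h; rw [h] at hL; norm_num at hL
  · intro h; rw [h] at hM; norm_num at hM
  · rintro ⟨h1 | h1, -⟩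
    · exact hl2 (by rw [h1] at hL; linear_combination -hL)
    · exact hlm2 (by rw [h1] at hL; linear_combination hL)
  · show fC L M = 0
    unfold fC
    linear_combination (M ^ 16) * hL - (L * (M ^ 30 + M ^ 29 * t + M ^ 28 * t ^ 2 - 5 * M ^ 28 + M ^ 27 * t ^ 3 - 6 * M ^ 27 * t + M ^ 26 * t ^ 4 - 7 * M ^ 26 * t ^ 2 + 3 * M ^ 26 + M ^ 25 * t ^ 5 - 8 * M ^ 25 * t ^ 3 + 9 * M ^ 25 * t + M ^ 24 * t ^ 6 - 9 * M ^ 24 * t ^ 4 + 16 * M ^ 24 * t ^ 2 + 13 * M ^ 24 + M ^ 23 * t ^ 7 - 10 * M ^ 23 * t ^ 5 + 24 * M ^ 23 * t ^ 3 + 4 * M ^ 23 * t + M ^ 22 * t ^ 8 - 11 * M ^ 22 * t ^ 6 + 33 * M ^ 22 * t ^ 4 - 12 * M ^ 22 * t ^ 2 + M ^ 21 * t ^ 9 - 12 * M ^ 21 * t ^ 7 + 43 * M ^ 21 * t ^ 5 - 36 * M ^ 21 * t ^ 3 - 4 * M ^ 21 * t + M ^ 20 * t ^ 10 - 13 * M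 ^ 20 * t ^ 8 + 54 * M ^ 20 * t ^ 6 - 69 * M ^ 20 * t ^ 4 + 8 * M ^ 20 * t ^ 2 - 32 * M ^ 20 + M ^ 19 * t ^ 11 - 14 * M ^ 19 * t ^ 9 + 66 * M ^ 19 * t ^ 7 - 112 * M ^ 19 * t ^ 5 + 44 * M ^ 19 * t ^ 3 - 28 * M ^ 19 * t + M ^ 18 * t ^ 12 - 15 * M ^ 18 * t ^ 10 + 79 * M ^ 18 * t ^ 8 - 166 * M ^ 18 * t ^ 6 + 113 * M ^ 18 * t ^ 4 - 36 * M ^ 18 * t ^ 2 - 14 * M ^ 18 + M ^ 17 * t ^ 13 - 16 * M ^ 17 * t ^ 11 + 93 * M ^ 17 * t ^ 9 - 232 * M ^ 17 * t ^ 7 + 225 * M ^ 17 * t ^ 5 - 80 * M ^ 17 * t ^ 3 + 14 * M ^ 17 * t + M ^ 16 * t ^ 14 - 17 * M ^ 16 * t ^ 12 + 108 * M ^ 16 * t ^ 10 - 311 * M ^ 16 * t ^ 8 + 391 * M ^ 16 * t ^ 6 - 193 * M ^ 16 * t ^ 4 + 50 * M ^ 16 * t ^ 2 + 34 * M ^ 16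 + M ^ 15 * t ^ 15 - 18 * M ^ 15 * t ^ 13 + 124 * M ^ 15 * t ^ 11 - 404 * M ^ 15 * t ^ 9 + 623 * M ^ 15 * t ^ 7 - 418 * M ^ 15 * t ^ 5 + 130 * M ^ 15 * t ^ 3 + 20 * M ^ 15 * t + M ^ 14 * t ^ 14 - 17 * M ^ 14 * t ^ 12 + 108 * M ^ 14 * t ^ 10 - 311 * M ^ 14 * t ^ 8 + 391 * M ^ 14 * t ^ 6 - 193 * M ^ 14 * t ^ 4 + 50 * M ^ 14 * t ^ 2 + 34 * M ^ 14 + M ^ 13 * t ^ 13 - 16 * M ^ 13 * t ^ 11 + 93 * M ^ 13 * t ^ 9 - 232 * M ^ 13 * t ^ 7 + 225 * M ^ 13 * t ^ 5 - 80 * M ^ 13 * t ^ 3 + 14 * M ^ 13 * t + M ^ 12 * t ^ 12 - 15 * M ^ 12 * t ^ 10 + 79 * M ^ 12 * t ^ 8 - 166 * M ^ 12 * t ^ 6 + 113 * M ^ 12 * t ^ 4 - 36 * M ^ 12 * t ^ 2 - 14 * M ^ 12 + M ^ 11 * t ^ 11 - 14 * M ^ 11 * t ^ 9 + 66 * M ^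 11 * t ^ 7 - 112 * M ^ 11 * t ^ 5 + 44 * M ^ 11 * t ^ 3 - 28 * M ^ 11 * t + M ^ 10 * t ^ 10 - 13 * M ^ 10 * t ^ 8 + 54 * M ^ 10 * t ^ 6 - 69 * M ^ 10 * t ^ 4 + 8 * M ^ 10 * t ^ 2 - 32 * M ^ 10 + M ^ 9 * t ^ 9 - 12 * M ^ 9 * t ^ 7 + 43 * M ^ 9 * t ^ 5 - 36 * M ^ 9 * t ^ 3 - 4 * M ^ 9 * t + M ^ 8 * t ^ 8 - 11 * M ^ 8 * t ^ 6 + 33 * M ^ 8 * t ^ 4 - 12 * M ^ 8 * t ^ 2 + M ^ 7 * t ^ 7 - 10 * M ^ 7 * t ^ 5 + 24 * M ^ 7 * t ^ 3 + 4 * M ^ 7 * t + M ^ 6 * t ^ 6 - 9 * M ^ 6 * t ^ 4 + 16 * M ^ 6 * t ^ 2 + 13 * M ^ 6 + M ^ 5 * t ^ 5 - 8 * M ^ 5 * t ^ 3 + 9 * M ^ 5 * t + M ^ 4 * t ^ 4 - 7 * M ^ 4 * t ^ 2 + 3 * M ^ 4 + M ^ 3 * t ^ 3 - 6 * M ^ 3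 * t + M ^ 2 * t ^ 2 - 5 * M ^ 2 + M * t + 1)) * hM - (L * M ^ 16) * hSt
  · show A41 M L = 0
    unfold A41
    linear_combination L ^ 4 * hM + (M * (-L ^ 6 - L ^ 5 * l - L ^ 4 * l ^ 2 + 2 * L ^ 4 - L ^ 3 * l ^ 3 + 3 * L ^ 3 * l - L ^ 2 * l ^ 2 + 2 * L ^ 2 - L * l - 1)) * hL + (M * L ^ 4) * ht
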